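/- arXiv:1404.5668 — 3 statements merged into one kernel-verified Lean document; each statement's English description precedes it below -/
import Mathlib

section
/- Under the conditions of the KL Legendre-Fenchel lemma, the minimizing cost function is C*(x) = (1/β) log(p(x)/(β·p0(x))) for x with p(x) > 0, i.e., C* satisfies p(x) = β·p0(x)·exp(β·C*(x)) and achieves the minimum of ∑_x (-p(x)C(x) + p0(x)exp(βC(x))). -/
open Real Finset

/-- `c` is a critical point of the convex function `c ↦ -(a * c) + b * exp (β * c)`. -/
theorem neg_mul_add_mul_exp_le_of_eq {a b β c : ℝ} (hb : 0 ≤ b)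
    (hc : a = β * b * exp (β * c)) (c' : ℝ) :
    -(a * c) + b * exp (β * c) ≤ -(a * c') + b * exp (β * c') := by
  have tangent : exp (β * c) * (β * (c' - c) + 1) ≤ exp (β * c') :=
    calc exp (β * c) * (β * (c' - c) + 1)
        ≤ exp (β * c) * exp (β * (c' - c)) := by gcongr; exact add_one_le_exp _
      _ = exp (β * c') := by rw [← exp_add]; ring_nf
  have := mul_le_mul_of_nonneg_left tangent hb
  rw [hc]
  linarith

theorem kl_legendre_fenchel_minimizer_general
    (X : Type*) [Fintype X]
    (p p0 : X → ℝ) (β : ℝ)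
    (hp : ∀ x, 0 < p x)
    (hp0 : ∀ x, 0 < p0 x)
    (hβ : 0 < β)
    (Cstar : X → ℝ)
    (hC : ∀ x, Cstar x = (1/β) * Real.log (p x / (β * p0 x))) :
    (∀ x, p x = β * p0 x * Real.exp (β * Cstar x)) ∧
    (∀ C : X → ℝ,
      (∑ x, (-(p x * Cstar x) + p0 x * Real.exp (β * Cstar x)))
        ≤ ∑ x, (-(p x * C x) + p0 x * Real.exp (β * C x))) := by
  have stationary : ∀ x, p x = β * p0 x * exp (β * Cstar x) := fun x => by
    have hβp0 : 0 < β * p0 x := mul_pos hβ (hp0 x)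
    rw [hC x, ← mul_assoc, mul_one_div_cancel hβ.ne', one_mul, exp_log (div_pos (hp x) hβp0),
      mul_div_cancel₀ _ hβp0.ne']
  exact ⟨stationary, fun C =>
    sum_le_sum fun x _ => neg_mul_add_mul_exp_le_of_eq (hp0 x).le (stationary x) (C x)⟩

theorem kl_legendre_fenchel_minimizer
    (X : Type*) [Fintype X] [Nonempty X]
    (p p0 : X → ℝ) (β : ℝ)
    (hp : ∀ x, 0 < p x) (hp1 : ∑ x, p x = 1)
    (hp0 : ∀ x, 0 < p0 x) (hp01 : ∑ x, p0 x = 1)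
    (hβ : 0 < β)
    (Cstar : X → ℝ)
    (hC : ∀ x, Cstar x = (1/β) * Real.log (p x / (β * p0 x))) :
    (∀ x, p x = β * p0 x * Real.exp (β * Cstar x)) ∧
    (∀ C : X → ℝ,
      (∑ x, (-(p x * Cstar x) + p0 x * Real.exp (β * Cstar x)))
        ≤ ∑ x, (-(p x * C x) + p0 x * Real.exp (β * C x))) :=
  kl_legendre_fenchel_minimizer_general X p p0 β hp hp0 hβ Cstar hC
end

section
/- The maximum value of the free energy F_β[p] over probability distributions p equals (1/β)·log(∑_x p0(x)·exp(β·U(x))). -/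
/-!
Gibbs variational principle. With `Z = ∑ p0 e^{βU}` and the Gibbs distribution
`q = p0 e^{βU} / Z`, every distribution `p` satisfies
`β F_β[p] = log Z - ∑ p log (p / q)`, and the last sum is a relative entropy, which is
nonnegative (Gibbs' inequality) and vanishes at `p = q`.
-/

open Real Finset

lemma sub_le_mul_log_div {a b : ℝ} (ha : 0 ≤ a) (hb : 0 < b) : a - b ≤ a * log (a / b) := by
  have h := mul_le_mul_of_nonneg_left (self_sub_one_le_mul_log (div_nonneg ha hb.le)) hb.le
  calc a - b = b * (a / b - 1) := by field_simp
    _ ≤ b * (a / b * log (a / b)) := h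
    _ = a * log (a / b) := by field_simp

theorem sum_mul_log_div_nonneg {ι : Type*} {s : Finset ι} {p q : ι → ℝ}
    (hp : ∀ i ∈ s, 0 ≤ p i) (hq : ∀ i ∈ s, 0 < q i)
    (hsum : ∑ i ∈ s, q i ≤ ∑ i ∈ s, p i) :
    0 ≤ ∑ i ∈ s, p i * log (p i / q i) :=
  calc 0 ≤ ∑ i ∈ s, (p i - q i) := by rw [sum_sub_distrib]; linarith
    _ ≤ ∑ i ∈ s, p i * log (p i / q i) :=
      sum_le_sum fun i hi => sub_le_mul_log_div (hp i hi) (hq i hi)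

section Gibbs

variable {X : Type*} [Fintype X] (U p0 : X → ℝ) (β : ℝ)

noncomputable def partitionFunction : ℝ := ∑ x, p0 x * exp (β * U x)

noncomputable def gibbsDist (x : X) : ℝ := p0 x * exp (β * U x) / partitionFunction U p0 β

variable [Nonempty X] {p0} (hp0 : ∀ x, 0 < p0 x)
include hp0

lemma partitionFunction_pos : 0 < partitionFunction U p0 β :=
  sum_pos (fun x _ => mul_pos (hp0 x) (exp_pos _)) univ_nonempty

lemma gibbsDist_pos (x : X) : 0 < gibbsDist U p0 β x :=
  div_pos (mul_pos (hp0 x) (exp_pos _)) (partitionFunction_pos U β hp0)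

lemma sum_gibbsDist : ∑ x, gibbsDist U p0 β x = 1 := by
  simp only [gibbsDist, ← sum_div]
  exact div_self (partitionFunction_pos U β hp0).ne'

lemma log_gibbsDist (x : X) :
    log (gibbsDist U p0 β x) = log (p0 x) + β * U x - log (partitionFunction U p0 β) := by
  rw [gibbsDist, log_div (mul_pos (hp0 x) (exp_pos _)).ne' (partitionFunction_pos U β hp0).ne',
    log_mul (hp0 x).ne' (exp_pos _).ne', log_exp]

lemma mul_log_div_gibbsDist (a : ℝ) (x : X) :
    a * log (a / gibbsDist U p0 β x) =
      a * log (a / p0 x) - β * (a * U x) + a * log (partitionFunction U p0 β) := by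
  rcases eq_or_ne a 0 with rfl | ha
  · simp
  rw [log_div ha (gibbsDist_pos U β hp0 x).ne', log_div ha (hp0 x).ne', log_gibbsDist U β hp0 x]
  ring

theorem free_energy_eq_sub_relEntropy {p : X → ℝ} (hp : ∑ x, p x = 1) (hβ : β ≠ 0) :
    (∑ x, p x * U x) - (1 / β) * ∑ x, p x * log (p x / p0 x) =
      (1 / β) * (log (partitionFunction U p0 β) -
        ∑ x, p x * log (p x / gibbsDist U p0 β x)) := by
  simp only [mul_log_div_gibbsDist U β hp0, sum_add_distrib, sum_sub_distrib, ← mul_sum,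
    ← sum_mul, hp, one_mul]
  field_simp
  ring

end Gibbs

theorem free_energy_max_value_general
    (X : Type*) [Fintype X] [Nonempty X]
    (U : X → ℝ) (p0 : X → ℝ) (β : ℝ)
    (hp0 : ∀ x, 0 < p0 x) (hβ : 0 < β) :
    IsGreatest
      {v : ℝ | ∃ p : X → ℝ, (∀ x, 0 ≤ p x) ∧ (∑ x, p x = 1) ∧
        v = (∑ x, p x * U x) - (1/β) * ∑ x, p x * Real.log (p x / p0 x)}
      ((1/β) * Real.log (∑ x, p0 x * Real.exp (β * U x))) := by
  have hq := gibbsDist_pos U β hp0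
  have hq_sum := sum_gibbsDist U β hp0
  constructor
  · refine ⟨gibbsDist U p0 β, fun x => (hq x).le, hq_sum, ?_⟩
    rw [free_energy_eq_sub_relEntropy U β hp0 hq_sum hβ.ne']
    simp [div_self (hq _).ne', partitionFunction]
  · rintro _ ⟨p, hp, hp_sum, rfl⟩
    rw [free_energy_eq_sub_relEntropy U β hp0 hp_sum hβ.ne']
    have hrel := sum_mul_log_div_nonneg (fun x _ => hp x) (fun x _ => hq x)
      (hq_sum.trans hp_sum.symm).le
    exact mul_le_mul_of_nonneg_left (sub_le_self _ hrel) (by positivity)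

theorem free_energy_max_value
    (X : Type*) [Fintype X] [Nonempty X]
    (U : X → ℝ) (p0 : X → ℝ) (β : ℝ)
    (hp0 : ∀ x, 0 < p0 x) (hp01 : ∑ x, p0 x = 1) (hβ : 0 < β) :
    IsGreatest
      {v : ℝ | ∃ p : X → ℝ, (∀ x, 0 ≤ p x) ∧ (∑ x, p x = 1) ∧
        v = (∑ x, p x * U x) - (1/β) * ∑ x, p x * Real.log (p x / p0 x)}
      ((1/β) * Real.log (∑ x, p0 x * Real.exp (β * U x))) :=
  free_energy_max_value_general X U p0 β hp0 hβ
end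

section
/- For β > 0 the saddle point value satisfies max_p min_C [∑_x p(x)(U(x)-C(x)) + ∑_x p0(x)exp(βC(x))] = min_C max_p [∑_x p(x)(U(x)-C(x)) + ∑_x p0(x)exp(βC(x))], i.e., the max and min can be exchanged with no duality gap. -/
/-!
The Lagrangian `L(C, p) = ∑ p (U - C) + ∑ p₀ exp (β C)` has an explicit saddle point. For
`C⋆ = U - c` the difference `U - C⋆` is constant, so `L(C⋆, ·)` is constant on the simplex. The
stationarity condition `∂L/∂C = 0` reads `p = β p₀ exp (β C)`; at `C⋆` this is the Gibbs
distribution `p⋆ ∝ p₀ exp (β U)`, normalised by the choice `c = log (β Z) / β`, and since `exp`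
lies above its tangent lines, `C⋆` is a global minimiser of `L(·, p⋆)`. A saddle point forces
`max min = L(C⋆, p⋆) = min max`.
-/

open Real Finset

theorem IsSaddlePointOn.sSup_iInf_eq_iInf_sSup {E F β : Type*} [ConditionallyCompleteLattice β]
    {Y : Set F} {f : E → F → β} {a : E} {b : F} (h : IsSaddlePointOn Set.univ Y f a b)
    (hb : b ∈ Y) (hbddBelow : ∀ y ∈ Y, BddBelow (Set.range (f · y)))
    (hbddAbove : ∀ x, BddAbove (f x '' Y)) :
    sSup ((fun y => ⨅ x, f x y) '' Y) = ⨅ x, sSup (f x '' Y) := by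
  have : Nonempty E := ⟨a⟩
  have iInf_le_value : ∀ y ∈ Y, ⨅ x, f x y ≤ f a b := fun y hy =>
    (ciInf_le (hbddBelow y hy) a).trans (h a trivial y hy)
  have value_le_sSup : ∀ x, f a b ≤ sSup (f x '' Y) := fun x =>
    (h x trivial b hb).trans (le_csSup (hbddAbove x) (Set.mem_image_of_mem _ hb))
  have hmaxmin : sSup ((fun y => ⨅ x, f x y) '' Y) = f a b :=
    le_antisymm (csSup_le ⟨_, Set.mem_image_of_mem _ hb⟩ (Set.forall_mem_image.2 iInf_le_value))
      (le_csSup_of_le ⟨_, Set.forall_mem_image.2 iInf_le_value⟩ (Set.mem_image_of_mem _ hb)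
        (le_ciInf fun x => h x trivial b hb))
  have hminmax : ⨅ x, sSup (f x '' Y) = f a b :=
    le_antisymm ((ciInf_le ⟨_, Set.forall_mem_range.2 value_le_sSup⟩ a).trans
        (csSup_le ⟨_, Set.mem_image_of_mem _ hb⟩ (Set.forall_mem_image.2 (h a trivial))))
      (le_ciInf value_le_sSup)
  rw [hmaxmin, hminmax]

theorem Real.mul_exp_add_tangent_le {q : ℝ} (hq : 0 ≤ q) (β s t : ℝ) :
    q * exp (β * s) + β * q * exp (β * s) * (t - s) ≤ q * exp (β * t) := by
  have hsplit : exp (β * t) = exp (β * s) * exp (β * (t - s)) := by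
    rw [← exp_add]; ring_nf
  have htangent := mul_le_mul_of_nonneg_left (add_one_le_exp (β * (t - s)))
    (mul_nonneg hq (exp_pos (β * s)).le)
  rw [hsplit]
  linarith

theorem Real.bddBelow_range_neg_mul_add_mul_exp {a q β : ℝ} (ha : 0 ≤ a) (hq : 0 < q)
    (hβ : 0 < β) : BddBelow (Set.range fun t => -(a * t) + q * exp (β * t)) := by
  rcases ha.eq_or_lt with rfl | ha
  · refine ⟨0, Set.forall_mem_range.2 fun t => ?_⟩
    simp only [zero_mul, neg_zero, zero_add]
    positivity
  · set s := log (a / (β * q)) / β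
    have hstationary : β * q * exp (β * s) = a := by
      rw [mul_div_cancel₀ _ hβ.ne', exp_log (by positivity)]
      field_simp
    refine ⟨-(a * s) + q * exp (β * s), Set.forall_mem_range.2 fun t => ?_⟩
    have := mul_exp_add_tangent_le hq.le β s t
    rw [hstationary] at this
    linarith

namespace GibbsMinimax

variable {X : Type*} [Fintype X] (U p0 : X → ℝ) (β : ℝ)

noncomputable def lagrangian (C p : X → ℝ) : ℝ :=
  ∑ x, p x * (U x - C x) + ∑ x, p0 x * exp (β * C x)

noncomputable def partitionFunction : ℝ :=
  ∑ x, p0 x * exp (β * U x)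

noncomputable def optimalCost : X → ℝ :=
  fun x => U x - log (β * partitionFunction U p0 β) / β

noncomputable def gibbs : X → ℝ :=
  fun x => β * p0 x * exp (β * optimalCost U p0 β x)

variable {U p0 β}

theorem lagrangian_eq_sum (C p : X → ℝ) :
    lagrangian U p0 β C p = ∑ x, (p x * (U x - C x) + p0 x * exp (β * C x)) :=
  sum_add_distrib.symm

theorem lagrangian_sub_const (c : ℝ) {p : X → ℝ} (hp : ∑ x, p x = 1) :
    lagrangian U p0 β (fun x => U x - c) p = c + ∑ x, p0 x * exp (β * (U x - c)) := by
  simp only [lagrangian, sub_sub_cancel, ← sum_mul, hp, one_mul]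

/-- `p = β p₀ exp (β C₀)` is the stationarity condition `∂L/∂C = 0` at `C₀`. -/
theorem lagrangian_stationary_le (hp0 : ∀ x, 0 ≤ p0 x) (C₀ C : X → ℝ) :
    lagrangian U p0 β C₀ (fun x => β * p0 x * exp (β * C₀ x)) ≤
      lagrangian U p0 β C (fun x => β * p0 x * exp (β * C₀ x)) := by
  rw [lagrangian_eq_sum, lagrangian_eq_sum]
  refine sum_le_sum fun x _ => ?_
  have := mul_exp_add_tangent_le (hp0 x) β (C₀ x) (C x)
  linarith

theorem bddBelow_range_lagrangian (hp0 : ∀ x, 0 < p0 x) (hβ : 0 < β) {p : X → ℝ}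
    (hp : ∀ x, 0 ≤ p x) : BddBelow (Set.range (lagrangian U p0 β · p)) := by
  choose m hm using fun x => bddBelow_range_neg_mul_add_mul_exp (hp x) (hp0 x) hβ
  refine ⟨∑ x, (p x * U x + m x), Set.forall_mem_range.2 fun C => ?_⟩
  rw [lagrangian_eq_sum]
  refine sum_le_sum fun x _ => ?_
  have := hm x (Set.mem_range_self (C x))
  linarith

theorem bddAbove_lagrangian_image_stdSimplex (C : X → ℝ) :
    BddAbove (lagrangian U p0 β C '' stdSimplex ℝ X) :=
  (isCompact_stdSimplex ℝ X).bddAbove_image (by unfold lagrangian; fun_prop)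

theorem partitionFunction_pos [Nonempty X] (hp0 : ∀ x, 0 < p0 x) :
    0 < partitionFunction U p0 β :=
  sum_pos (fun x _ => mul_pos (hp0 x) (exp_pos _)) univ_nonempty

theorem gibbs_mem_stdSimplex [Nonempty X] (hp0 : ∀ x, 0 < p0 x) (hβ : 0 < β) :
    gibbs U p0 β ∈ stdSimplex ℝ X := by
  have hZ : 0 < partitionFunction U p0 β := partitionFunction_pos hp0
  refine ⟨fun x => by unfold gibbs; have := hp0 x; positivity, ?_⟩
  have hterm : ∀ x, gibbs U p0 β x = p0 x * exp (β * U x) / partitionFunction U p0 β := by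
    intro x
    rw [gibbs, optimalCost, mul_sub, mul_div_cancel₀ _ hβ.ne', exp_sub, exp_log (mul_pos hβ hZ)]
    field_simp
  rw [sum_congr rfl fun x _ => hterm x, ← sum_div]
  exact div_self hZ.ne'

theorem isSaddlePointOn_optimalCost_gibbs [Nonempty X] (hp0 : ∀ x, 0 < p0 x) (hβ : 0 < β) :
    IsSaddlePointOn Set.univ (stdSimplex ℝ X) (lagrangian U p0 β) (optimalCost U p0 β)
      (gibbs U p0 β) := by
  intro C _ p hp
  calc lagrangian U p0 β (optimalCost U p0 β) p
      = lagrangian U p0 β (optimalCost U p0 β) (gibbs U p0 β) :=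
        (lagrangian_sub_const _ hp.2).trans
          (lagrangian_sub_const _ (gibbs_mem_stdSimplex hp0 hβ).2).symm
    _ ≤ lagrangian U p0 β C (gibbs U p0 β) := lagrangian_stationary_le (fun x => (hp0 x).le) _ C

theorem image_stdSimplex_eq_setOf (g : (X → ℝ) → ℝ) :
    g '' stdSimplex ℝ X = {v | ∃ p : X → ℝ, (∀ x, 0 ≤ p x) ∧ (∑ x, p x = 1) ∧ v = g p} := by
  ext v
  simp only [Set.mem_image, stdSimplex, Set.mem_ofPred_eq, and_assoc, eq_comm]

end GibbsMinimax

open GibbsMinimax in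
theorem minimax_no_duality_gap_general
    (X : Type*) [Fintype X] [Nonempty X]
    (U : X → ℝ) (p0 : X → ℝ) (β : ℝ)
    (hp0 : ∀ x, 0 < p0 x) (hβ : 0 < β) :
    sSup {v : ℝ | ∃ p : X → ℝ, (∀ x, 0 ≤ p x) ∧ (∑ x, p x = 1) ∧
        v = ⨅ C : X → ℝ,
          ((∑ x, p x * (U x - C x)) + ∑ x, p0 x * Real.exp (β * C x))}
      =
    ⨅ C : X → ℝ,
      sSup {v : ℝ | ∃ p : X → ℝ, (∀ x, 0 ≤ p x) ∧ (∑ x, p x = 1) ∧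
        v = (∑ x, p x * (U x - C x)) + ∑ x, p0 x * Real.exp (β * C x)} := by
  have key := (isSaddlePointOn_optimalCost_gibbs (U := U) hp0 hβ).sSup_iInf_eq_iInf_sSup
    (gibbs_mem_stdSimplex hp0 hβ) (fun _ hp => bddBelow_range_lagrangian hp0 hβ hp.1)
    bddAbove_lagrangian_image_stdSimplex
  simpa only [image_stdSimplex_eq_setOf, lagrangian] using key

theorem minimax_no_duality_gap
    (X : Type*) [Fintype X] [Nonempty X]
    (U : X → ℝ) (p0 : X → ℝ) (β : ℝ)
    (hp0 : ∀ x, 0 < p0 x) (hp01 : ∑ x, p0 x = 1) (hβ : 0 < β) :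
    sSup {v : ℝ | ∃ p : X → ℝ, (∀ x, 0 ≤ p x) ∧ (∑ x, p x = 1) ∧
        v = ⨅ C : X → ℝ,
          ((∑ x, p x * (U x - C x)) + ∑ x, p0 x * Real.exp (β * C x))}
      =
    ⨅ C : X → ℝ,
      sSup {v : ℝ | ∃ p : X → ℝ, (∀ x, 0 ≤ p x) ∧ (∑ x, p x = 1) ∧
        v = (∑ x, p x * (U x - C x)) + ∑ x, p0 x * Real.exp (β * C x)} :=
  minimax_no_duality_gap_general X U p0 β hp0 hβ
end
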